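/- arXiv:2107.04947 — 6 statements merged into one kernel-verified Lean document; each statement's English description precedes it below -/
import Mathlib

section
/- The ratio Z(m) / (Z(m) + A(m)) converges in probability to β³ / (β³ − β + 1) as m → ∞; that is, for every ε > 0, P( |Z(m)/(Z(m)+A(m)) − β³/(β³−β+1)| > ε ) → 0 as m → ∞. (Chain quality of pipelined HotStuff under the forking attack: the fraction of honest blocks in the main chain converges to β³/(β³−β+1).) -/
open MeasureTheory ProbabilityTheory Filter Finset
open scoped Classical Topology


section aux
variable {Ω : Type*} [MeasurableSpace Ω] {μ : Measure Ω} [IsProbabilityMeasure μ]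

lemma bern_meas_key {h : Ω → ℝ} (hm : Measurable h) (h01 : ∀ ω, h ω = 0 ∨ h ω = 1)
    {s : Set ℝ} (hs : MeasurableSet s) :
    μ (h ⁻¹' s) = (if (1:ℝ) ∈ s then μ {ω | h ω = 1} else 0)
      + (if (0:ℝ) ∈ s then 1 - μ {ω | h ω = 1} else 0) := by
  have hset : MeasurableSet {ω | h ω = 1} := hm (measurableSet_singleton 1)
  have hle : μ {ω | h ω = 1} ≤ 1 := prob_le_one
  by_cases h1 : (1:ℝ) ∈ s <;> by_cases h0 : (0:ℝ) ∈ s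
  · have : h ⁻¹' s = Set.univ := by
      ext ω; simp only [Set.mem_preimage, Set.mem_univ, iff_true]
      rcases h01 ω with h|h <;> rw [h] <;> assumption
    rw [if_pos h1, if_pos h0, this, measure_univ]
    exact (add_tsub_cancel_of_le hle).symm
  · rw [if_pos h1, if_neg h0]
    have : h ⁻¹' s = {ω | h ω = 1} := by
      ext ω; simp only [Set.mem_preimage, Set.mem_setOf_eq]
      constructor
      · intro hh; rcases h01 ω with h|h
        · exact absurd (h ▸ hh) h0
        · exact h
      · intro hh; rw [hh]; exact h1
    rw [this, add_zero]
  · rw [if_neg h1, if_pos h0]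
    have : h ⁻¹' s = {ω | h ω = 1}ᶜ := by
      ext ω; simp only [Set.mem_preimage, Set.mem_compl_iff, Set.mem_setOf_eq]
      constructor
      · intro hh heq; exact h1 (heq ▸ hh)
      · intro hh; rcases h01 ω with h|h
        · rw [h]; exact h0
        · exact absurd h hh
    rw [this, measure_compl hset (measure_ne_top μ _), measure_univ, zero_add]
  · rw [if_neg h1, if_neg h0, add_zero]
    have : h ⁻¹' s = ∅ := by
      ext ω; simp only [Set.mem_preimage, Set.mem_empty_iff_false, iff_false]
      intro hh; rcases h01 ω with h|h
      · exact h0 (h ▸ hh)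
      · exact h1 (h ▸ hh)
    rw [this]; simp

lemma bern_identDistrib {f g : Ω → ℝ} (hf : Measurable f) (hg : Measurable g)
    (h01f : ∀ ω, f ω = 0 ∨ f ω = 1) (h01g : ∀ ω, g ω = 0 ∨ g ω = 1)
    (hp : μ {ω | f ω = 1} = μ {ω | g ω = 1}) : IdentDistrib f g μ μ := by
  refine ⟨hf.aemeasurable, hg.aemeasurable, ?_⟩
  refine Measure.ext fun s hs => ?_
  rw [Measure.map_apply hf hs, Measure.map_apply hg hs,
    bern_meas_key hf h01f hs, bern_meas_key hg h01g hs, hp]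

lemma bern_integral {f : Ω → ℝ} (hf : Measurable f) (h01 : ∀ ω, f ω = 0 ∨ f ω = 1) :
    ∫ ω, f ω ∂μ = (μ {ω | f ω = 1}).toReal := by
  have hset : MeasurableSet {ω | f ω = 1} := hf (measurableSet_singleton 1)
  have : f = Set.indicator {ω | f ω = 1} (fun _ => (1:ℝ)) := by
    funext ω
    rcases h01 ω with h|h
    · rw [h, Set.indicator_apply, if_neg]; simp [h]
    · rw [h, Set.indicator_apply, if_pos (by simp [Set.mem_setOf_eq, h])]
  conv_lhs => rw [this]
  rw [integral_indicator_const _ hset, smul_eq_mul, mul_one]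
  rfl

lemma bern_integrable {f : Ω → ℝ} (hf : Measurable f) (h01 : ∀ ω, f ω = 0 ∨ f ω = 1) :
    Integrable f μ :=
  (integrable_const (1:ℝ)).mono' hf.aestronglyMeasurable
    (Filter.Eventually.of_forall fun ω => by rcases h01 ω with h|h <;> simp [h])

end aux

set_option maxHeartbeats 1000000 in
/-- Chain quality of pipelined HotStuff under the forking attack: with `Z(m)` the number of
honest blocks and `A(m) = ∑_{i=1}^m (1 - X_i)` the number of adversarial blocks in the main
chain, the ratio `Z(m)/(Z(m)+A(m))` converges in probability to `β³/(β³ − β + 1)`.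
(In Lean, real division by `0` yields `0`, matching the convention that the ratio is `0`
when the denominator vanishes.) -/
theorem stmt3
    {Ω : Type*} [MeasurableSpace Ω] (μ : Measure Ω) [IsProbabilityMeasure μ]
    (β : ℝ) (hβ0 : 0 < β) (hβ1 : β < 1)
    (X : ℕ → Ω → ℝ)
    (hmeas : ∀ i, Measurable (X i))
    (hindep : iIndepFun X μ)
    (h01 : ∀ i ω, X i ω = 0 ∨ X i ω = 1)
    (hber : ∀ i, μ {ω | X i ω = 1} = ENNReal.ofReal β)
    (Z : ℕ → Ω → ℝ)
    (hZ : ∀ i ω, Z i ω = X i ω * X (i + 1) ω * X (i + 2) ω)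
    (A : ℕ → Ω → ℝ)
    (hA : ∀ m ω, A m ω = ∑ i ∈ Finset.Icc 1 m, (1 - X i ω))
    (ε : ℝ) (hε : 0 < ε) :
    Tendsto (fun m : ℕ =>
        μ {ω | |(∑ i ∈ Finset.Icc 1 m, Z i ω) /
            ((∑ i ∈ Finset.Icc 1 m, Z i ω) + A m ω) - β ^ 3 / (β ^ 3 - β + 1)| > ε})
      atTop (nhds 0) := by
  -- basic facts about Z
  have hZ01 : ∀ i ω, Z i ω = 0 ∨ Z i ω = 1 := by
    intro i ω
    rw [hZ]
    rcases h01 i ω with h1|h1 <;> rcases h01 (i+1) ω with h2|h2 <;>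
      rcases h01 (i+2) ω with h3|h3 <;> rw [h1, h2, h3] <;> norm_num
  have hZmeas : ∀ i, Measurable (Z i) := by
    intro i
    have : Z i = fun ω => X i ω * X (i+1) ω * X (i+2) ω := funext fun ω => hZ i ω
    rw [this]
    exact ((hmeas _).mul (hmeas _)).mul (hmeas _)
  -- probability that Z i = 1
  have pZ : ∀ n, μ {ω | Z n ω = 1} = (ENNReal.ofReal β) ^ 3 := by
    intro n
    have hset : {ω | Z n ω = 1} = ⋂ i ∈ ({n, n+1, n+2} : Finset ℕ), X i ⁻¹' {1} := by
      ext ω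
      simp only [Set.mem_setOf_eq, Set.mem_iInter, Finset.mem_insert, Finset.mem_singleton,
        Set.mem_preimage, Set.mem_singleton_iff]
      constructor
      · intro h i hi
        have hx1 : X n ω = 1 := by
          rcases h01 n ω with h1|h1
          · rw [hZ, h1] at h; simp at h
          · exact h1
        have hx2 : X (n+1) ω = 1 := by
          rcases h01 (n+1) ω with h2|h2
          · rw [hZ, h2] at h; simp at h
          · exact h2
        have hx3 : X (n+2) ω = 1 := by
          rcases h01 (n+2) ω with h3|h3
          · rw [hZ, h3] at h; simp at h
          · exact h3
        rcases hi with rfl|rfl|rfl <;> assumption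
      · intro h
        rw [hZ, h n (by simp), h (n+1) (by simp), h (n+2) (by simp)]
        norm_num
    rw [hset, hindep.meas_biInter (fun i _ => ⟨{1}, measurableSet_singleton 1, rfl⟩)]
    have hcard : ({n, n+1, n+2} : Finset ℕ).card = 3 := by
      rw [Finset.card_insert_of_notMem (by simp),
        Finset.card_insert_of_notMem (by simp), Finset.card_singleton]
    have : ∀ i ∈ ({n, n+1, n+2} : Finset ℕ), μ (X i ⁻¹' {1}) = ENNReal.ofReal β := by
      intro i _
      have : X i ⁻¹' {1} = {ω | X i ω = 1} := rfl
      rw [this, hber]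
    rw [Finset.prod_congr rfl this, Finset.prod_const, hcard]
  -- a.e. limit of partial sums of Z along residues
  have hres : ∀ r : ℕ, ∀ᵐ ω ∂μ, Tendsto
      (fun n : ℕ => (∑ k ∈ range n, Z (3*k + r + 1) ω) / n) atTop (𝓝 (β ^ 3)) := by
    intro r
    set V : ℕ → Ω → ℝ := fun k => Z (3*k + r + 1) with hV
    have hVmeas : ∀ k, Measurable (V k) := fun k => hZmeas _
    have hV01 : ∀ k ω, V k ω = 0 ∨ V k ω = 1 := fun k ω => hZ01 _ ω
    have hVindep : Pairwise (Function.onFun (IndepFun · · μ) V) := by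
      intro k j hkj
      have hdisj : Disjoint ({3*k+r+1, 3*k+r+2, 3*k+r+3} : Finset ℕ)
          ({3*j+r+1, 3*j+r+2, 3*j+r+3} : Finset ℕ) := by
        rw [Finset.disjoint_left]
        intro a ha hb
        simp only [Finset.mem_insert, Finset.mem_singleton] at ha hb
        omega
      have base := hindep.indepFun_finset _ _ hdisj hmeas
      have hg : ∀ a : ℕ, Measurable (fun v : (i : ({3*a+r+1, 3*a+r+2, 3*a+r+3} : Finset ℕ)) → ℝ =>
          v ⟨3*a+r+1, by simp⟩ * v ⟨3*a+r+2, by simp⟩ * v ⟨3*a+r+3, by simp⟩) := by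
        intro a
        fun_prop
      have hVeq : ∀ a : ℕ, V a = (fun v : (i : ({3*a+r+1, 3*a+r+2, 3*a+r+3} : Finset ℕ)) → ℝ =>
          v ⟨3*a+r+1, by simp⟩ * v ⟨3*a+r+2, by simp⟩ * v ⟨3*a+r+3, by simp⟩) ∘
          (fun ω (i : ({3*a+r+1, 3*a+r+2, 3*a+r+3} : Finset ℕ)) => X i ω) := by
        intro a
        funext ω
        simp only [Function.comp_apply, hV, hZ,
          show 3*a+r+1+1 = 3*a+r+2 from by omega, show 3*a+r+1+2 = 3*a+r+3 from by omega]
      show IndepFun (V k) (V j) μ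
      rw [hVeq k, hVeq j]
      exact base.comp (hg k) (hg j)
    have hVident : ∀ k, IdentDistrib (V k) (V 0) μ μ :=
      fun k => bern_identDistrib (hVmeas k) (hVmeas 0) (hV01 k) (hV01 0) (by rw [pZ, pZ])
    have hVint : Integrable (V 0) μ := bern_integrable (hVmeas 0) (hV01 0)
    have hEV : μ[V 0] = β ^ 3 := by
      rw [bern_integral (hVmeas 0) (hV01 0), pZ, ENNReal.toReal_pow,
        ENNReal.toReal_ofReal hβ0.le]
    have := strong_law_ae_real V hVint hVindep hVident
    rw [hEV] at this
    exact this
  -- a.e. limit for A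
  have hAres : ∀ᵐ ω ∂μ, Tendsto (fun m : ℕ => A m ω / m) atTop (𝓝 (1 - β)) := by
    set Y : ℕ → Ω → ℝ := fun i ω => 1 - X (1 + i) ω with hY
    have hYmeas : ∀ i, Measurable (Y i) := fun i => measurable_const.sub (hmeas _)
    have hY01 : ∀ i ω, Y i ω = 0 ∨ Y i ω = 1 := by
      intro i ω; rcases h01 (1+i) ω with h|h <;> simp [hY, h]
    have pY : ∀ i, μ {ω | Y i ω = 1} = 1 - ENNReal.ofReal β := by
      intro i
      have hsetY : {ω | Y i ω = 1} = {ω | X (1+i) ω = 1}ᶜ := by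
        ext ω
        simp only [Set.mem_setOf_eq, Set.mem_compl_iff, hY]
        constructor
        · intro h h1; rw [h1] at h; norm_num at h
        · intro h; rcases h01 (1+i) ω with h0|h0
          · rw [h0]; norm_num
          · exact absurd h0 h
      have hms : MeasurableSet {ω | X (1+i) ω = 1} := hmeas (1+i) (measurableSet_singleton 1)
      rw [hsetY, measure_compl hms (measure_ne_top μ _), measure_univ, hber]
    have hYindep : Pairwise (Function.onFun (IndepFun · · μ) Y) := by
      intro i j hij
      have h1 : (1+i : ℕ) ≠ 1+j := by omega
      have hφ : Measurable (fun x : ℝ => 1 - x) := measurable_const.sub measurable_id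
      exact (hindep.indepFun h1).comp hφ hφ
    have hYident : ∀ i, IdentDistrib (Y i) (Y 0) μ μ :=
      fun i => bern_identDistrib (hYmeas i) (hYmeas 0) (hY01 i) (hY01 0) (by rw [pY, pY])
    have hYint : Integrable (Y 0) μ := bern_integrable (hYmeas 0) (hY01 0)
    have hEY : μ[Y 0] = 1 - β := by
      rw [bern_integral (hYmeas 0) (hY01 0), pY,
        ENNReal.toReal_sub_of_le (ENNReal.ofReal_le_one.2 hβ1.le) ENNReal.one_ne_top,
        ENNReal.toReal_one, ENNReal.toReal_ofReal hβ0.le]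
    have hslln := strong_law_ae_real Y hYint hYindep hYident
    rw [hEY] at hslln
    have hAsum : ∀ m ω, A m ω = ∑ i ∈ range m, Y i ω := by
      intro m ω
      rw [hA, ← Finset.Ico_add_one_right_eq_Icc, Finset.sum_Ico_eq_sum_range]
      simp [hY]
    filter_upwards [hslln] with ω hω
    exact Tendsto.congr (fun m => by rw [hAsum]) hω
  -- a.e. limit for the sum of Z
  have hSae : ∀ᵐ ω ∂μ, Tendsto (fun m : ℕ => (∑ i ∈ Finset.Icc 1 m, Z i ω) / m)
      atTop (𝓝 (β^3)) := by
    filter_upwards [hres 0, hres 1, hres 2] with ω t0 t1 t2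
    set T : ℕ → ℝ := fun m => ∑ i ∈ range m, Z (1+i) ω with hT
    have hTIcc : ∀ m, (∑ i ∈ Finset.Icc 1 m, Z i ω) = T m := by
      intro m
      rw [hT, ← Finset.Ico_add_one_right_eq_Icc, Finset.sum_Ico_eq_sum_range]
      simp
    have hT3 : ∀ n, T (3*n) = ∑ k ∈ range n,
        (Z (3*k+0+1) ω + Z (3*k+1+1) ω + Z (3*k+2+1) ω) := by
      intro n
      induction n with
      | zero => simp [hT]
      | succ n ih =>
        have e1 : T (3*(n+1)) = T (3*n) + (Z (3*n+0+1) ω + Z (3*n+1+1) ω + Z (3*n+2+1) ω) := by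
          simp only [hT]
          rw [show 3*(n+1) = (3*n+1+1)+1 from by ring, Finset.sum_range_succ,
            Finset.sum_range_succ, Finset.sum_range_succ,
            show 1+(3*n) = 3*n+0+1 from by ring, show 1+(3*n+1) = 3*n+1+1 from by ring,
            show 1+(3*n+1+1) = 3*n+2+1 from by ring]
          ring
        rw [e1, ih, Finset.sum_range_succ]
    have hg3 : Tendsto (fun n : ℕ => T (3*n) / n) atTop (𝓝 (3 * β^3)) := by
      have key := (t0.add t1).add t2
      have heq3 : ∀ n : ℕ, (∑ k ∈ range n, Z (3*k+0+1) ω)/n + (∑ k ∈ range n, Z (3*k+1+1) ω)/n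
          + (∑ k ∈ range n, Z (3*k+2+1) ω)/n = T (3*n)/n := by
        intro n
        rw [hT3, Finset.sum_add_distrib, Finset.sum_add_distrib]
        ring
      have h2 := key.congr heq3
      convert h2 using 2
      ring
    have hdiv3 : Tendsto (fun m : ℕ => m / 3) atTop atTop := by
      apply tendsto_atTop_atTop.2
      intro b
      exact ⟨3*b, fun m hm => (Nat.le_div_iff_mul_le (by norm_num)).2 (by omega)⟩
    have he : Tendsto (fun m : ℕ => ((m % 3 : ℕ):ℝ)/(3*m)) atTop (𝓝 0) := by
      refine squeeze_zero' (Eventually.of_forall fun m => by positivity)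
        (Eventually.of_forall fun m => ?_) (tendsto_const_div_atTop_nhds_zero_nat 2)
      rcases Nat.eq_zero_or_pos m with rfl|hm
      · simp
      · have h1 : ((m % 3 : ℕ):ℝ) ≤ 2 := by
          exact_mod_cast Nat.lt_succ_iff.1 (Nat.mod_lt m (by norm_num))
        have h2 : (0:ℝ) < m := by exact_mod_cast hm
        calc ((m % 3 : ℕ):ℝ)/(3*m) ≤ 2/(3*(m:ℝ)) := by gcongr
        _ ≤ 2/(m:ℝ) := by
            apply div_le_div_of_nonneg_left (by norm_num) h2
            linarith
    have hq : Tendsto (fun m : ℕ => ((m / 3 : ℕ):ℝ)/m) atTop (𝓝 (1/3)) := by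
      have heq : ∀ᶠ m : ℕ in atTop,
          1/3 - ((m % 3 : ℕ):ℝ)/(3*m) = ((m / 3 : ℕ):ℝ)/m := by
        filter_upwards [eventually_gt_atTop 0] with m hm
        have hm0 : (m:ℝ) ≠ 0 := Nat.cast_ne_zero.2 hm.ne'
        have hdm : 3*((m/3:ℕ):ℝ) + ((m%3:ℕ):ℝ) = (m:ℝ) := by exact_mod_cast Nat.div_add_mod m 3
        field_simp
        first
        | linear_combination (-(m:ℝ)) * hdm
        | linear_combination (m:ℝ) * hdm
        | linarith
        | nlinarith [hdm]
      have h13 : Tendsto (fun _ : ℕ => (1/3:ℝ)) atTop (𝓝 (1/3)) := tendsto_const_nhds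
      have := h13.sub he
      rw [sub_zero] at this
      exact this.congr' heq
    have hrem : Tendsto (fun m : ℕ => (T m - T (3*(m/3)))/m) atTop (𝓝 0) := by
      have hkey : ∀ m : ℕ, 0 ≤ T m - T (3*(m/3)) ∧ T m - T (3*(m/3)) ≤ 2 := by
        intro m
        have hdm := Nat.div_add_mod m 3
        have hlt := Nat.mod_lt m (show 0 < 3 from by norm_num)
        have hsum : T m = T (3*(m/3)) + ∑ i ∈ Ico (3*(m/3)) m, Z (1+i) ω := by
          simp only [hT]
          simp only [Finset.range_eq_Ico]
          exact (Finset.sum_Ico_consecutive (fun i => Z (1+i) ω) (n := 3*(m/3)) (k := m) (Nat.zero_le _) (by omega)).symm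
        have hnn : (0:ℝ) ≤ ∑ i ∈ Ico (3*(m/3)) m, Z (1+i) ω :=
          Finset.sum_nonneg fun i _ => by rcases hZ01 (1+i) ω with h|h <;> rw [h] <;> norm_num
        have hub : ∑ i ∈ Ico (3*(m/3)) m, Z (1+i) ω ≤ 2 := by
          calc ∑ i ∈ Ico (3*(m/3)) m, Z (1+i) ω
              ≤ (Finset.Ico (3*(m/3)) m).card • (1:ℝ) :=
                Finset.sum_le_card_nsmul _ _ _
                  (fun i _ => by rcases hZ01 (1+i) ω with h|h <;> rw [h] <;> norm_num)
            _ = ((m - 3*(m/3) : ℕ):ℝ) := by rw [Nat.card_Ico]; simp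
            _ ≤ 2 := by
                have h2 : m - 3*(m/3) ≤ 2 := by omega
                exact_mod_cast h2
        constructor
        · rw [hsum]; linarith
        · rw [hsum]; linarith
      refine squeeze_zero' (Eventually.of_forall fun m => ?_)
        (Eventually.of_forall fun m => ?_) (tendsto_const_div_atTop_nhds_zero_nat 2)
      · exact div_nonneg (hkey m).1 (Nat.cast_nonneg m)
      · rcases Nat.eq_zero_or_pos m with rfl|hm
        · simp
        · have h2 : (0:ℝ) < m := by exact_mod_cast hm
          exact (div_le_div_iff_of_pos_right h2).2 (hkey m).2
    have hcalc : ∀ m : ℕ, T m / m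
        = (T (3*(m/3)) / ((m/3 : ℕ):ℝ)) * (((m/3:ℕ):ℝ)/m) + (T m - T (3*(m/3)))/m := by
      intro m
      rcases eq_or_ne ((m/3:ℕ):ℝ) 0 with h|h
      · have h0 : (m/3 : ℕ) = 0 := by exact_mod_cast h
        rw [h, h0]
        simp [hT]
      · have hm0 : (m:ℝ) ≠ 0 := by
          have : m ≠ 0 := by
            intro h0
            apply h
            rw [h0]
            norm_num
          exact Nat.cast_ne_zero.2 this
        field_simp
        try ring
    have hmain := ((hg3.comp hdiv3).mul hq).add hrem
    have hval : (3*β^3) * (1/3) + 0 = β^3 := by ring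
    rw [hval] at hmain
    have hfinal : Tendsto (fun m : ℕ => T m / m) atTop (𝓝 (β^3)) :=
      Tendsto.congr (fun m => (hcalc m).symm) hmain
    exact Tendsto.congr (fun m => by rw [hTIcc]) hfinal
  -- combine into the ratio
  have hratio : ∀ᵐ ω ∂μ, Tendsto (fun m : ℕ => (∑ i ∈ Finset.Icc 1 m, Z i ω) /
      ((∑ i ∈ Finset.Icc 1 m, Z i ω) + A m ω)) atTop (𝓝 (β^3/(β^3 - β + 1))) := by
    filter_upwards [hSae, hAres] with ω hS hA'
    have hpos : (0:ℝ) < β^3 + (1 - β) := by nlinarith [pow_pos hβ0 3]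
    have hden := hS.add hA'
    have hdiv := hS.div hden hpos.ne'
    have heq : ∀ᶠ m : ℕ in atTop,
        ((∑ i ∈ Finset.Icc 1 m, Z i ω)/m) /
          ((∑ i ∈ Finset.Icc 1 m, Z i ω)/m + A m ω/m)
        = (∑ i ∈ Finset.Icc 1 m, Z i ω) / ((∑ i ∈ Finset.Icc 1 m, Z i ω) + A m ω) := by
      filter_upwards [eventually_gt_atTop 0] with m hm
      have hm0 : (m:ℝ) ≠ 0 := Nat.cast_ne_zero.2 hm.ne'
      rcases eq_or_ne ((∑ i ∈ Finset.Icc 1 m, Z i ω) + A m ω) 0 with h|h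
      · rw [← add_div, h]
        simp
      · rw [← add_div]
        rw [div_div_div_cancel_right₀ hm0]
    have hL : (𝓝 (β^3/(β^3 + (1 - β)))) = (𝓝 (β^3/(β^3 - β + 1))) := by ring_nf
    rw [hL] at hdiv
    exact hdiv.congr' heq
  -- measurability
  have hfm : ∀ m : ℕ, AEStronglyMeasurable (fun ω => (∑ i ∈ Finset.Icc 1 m, Z i ω) /
      ((∑ i ∈ Finset.Icc 1 m, Z i ω) + A m ω)) μ := by
    intro m
    have hSm : Measurable fun ω => ∑ i ∈ Finset.Icc 1 m, Z i ω :=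
      Finset.measurable_sum _ (fun i _ => hZmeas i)
    have hAm : Measurable (A m) := by
      have : A m = fun ω => ∑ i ∈ Finset.Icc 1 m, (1 - X i ω) := funext fun ω => hA m ω
      rw [this]
      exact Finset.measurable_sum _ (fun i _ => measurable_const.sub (hmeas i))
    exact (hSm.div (hSm.add hAm)).aestronglyMeasurable
  have hTIM := tendstoInMeasure_of_tendsto_ae (μ := μ)
    (g := fun _ => β^3/(β^3 - β + 1)) hfm hratio
  have hT := hTIM (ENNReal.ofReal ε) (ENNReal.ofReal_pos.2 hε)
  refine tendsto_of_tendsto_of_tendsto_of_le_of_le tendsto_const_nhds hT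
    (fun m => zero_le) (fun m => measure_mono ?_)
  intro ω hω
  simp only [Set.mem_setOf_eq] at hω ⊢
  rw [edist_dist, Real.dist_eq]
  exact ENNReal.ofReal_le_ofReal (le_of_lt hω)
end

section
/- For every real β with 0 < β < 1 one has 0 < β³ − β + 1 < 1, and consequently (1 − β)/(β³ − β + 1) > 1 − β. (Under the forking attack on pipelined HotStuff, the adversary's long-run fraction of blocks in the main chain, (1−β)/(β³−β+1), strictly exceeds its fair share 1−β, so incentive compatibility fails.) -/
/-- For `0 < β < 1` one has `0 < β³ − β + 1 < 1`, and consequently the adversary's fraction of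
blocks `(1 − β)/(β³ − β + 1)` under the forking attack strictly exceeds its fair share `1 − β`. -/
theorem stmt8 (β : ℝ) (hβ0 : 0 < β) (hβ1 : β < 1) :
    (0 < β ^ 3 - β + 1 ∧ β ^ 3 - β + 1 < 1) ∧ (1 - β) / (β ^ 3 - β + 1) > 1 - β := by
  have h0 : 0 < β ^ 3 - β + 1 := by nlinarith [pow_pos hβ0 3, sq_nonneg (β - 1), sq_nonneg β]
  have h1 : β ^ 3 - β + 1 < 1 := by nlinarith [sq_nonneg β]
  refine ⟨⟨h0, h1⟩, ?_⟩
  rw [gt_iff_lt, lt_div_iff₀ h0]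
  nlinarith
end

section
/- Let 0 < β < 1, α = 1 − β, and let P be the 4×4 row-stochastic matrix on states {0,1,2,3} with P(0,0)=α, P(0,1)=β, P(1,0)=α, P(1,2)=β, P(2,0)=α, P(2,3)=β, P(3,1)=α, P(3,3)=β, and all other entries 0. Then the vector π with π₀ = (1+β)(1−β)²/(β³−β²+1), π₁ = β(1−β)/(β³−β²+1), π₂ = β²(1−β)/(β³−β²+1), π₃ = β³/(β³−β²+1) has nonnegative entries summing to 1 and satisfies πP = π; moreover π is the unique probability vector satisfying πP = π. -/
/-- Stationary distribution of the delay-attack Markov chain on pipelined HotStuff: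
the vector `π = ((1+β)(1−β)²/(β³−β²+1), β(1−β)/(β³−β²+1), β²(1−β)/(β³−β²+1), β³/(β³−β²+1))`
is the unique probability vector with `π P = π` for the transition matrix `P` with
`P(0,0)=α, P(0,1)=β, P(1,0)=α, P(1,2)=β, P(2,0)=α, P(2,3)=β, P(3,1)=α, P(3,3)=β`. -/
theorem stmt11 (β α : ℝ) (hβ0 : 0 < β) (hβ1 : β < 1) (hα : α = 1 - β)
    (P : Matrix (Fin 4) (Fin 4) ℝ)
    (hP : P = Matrix.of ![![α, β, 0, 0], ![α, 0, β, 0], ![α, 0, 0, β], ![0, α, 0, β]])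
    (pvec : Fin 4 → ℝ)
    (hpvec : pvec = ![(1 + β) * (1 - β) ^ 2 / (β ^ 3 - β ^ 2 + 1),
        β * (1 - β) / (β ^ 3 - β ^ 2 + 1),
        β ^ 2 * (1 - β) / (β ^ 3 - β ^ 2 + 1),
        β ^ 3 / (β ^ 3 - β ^ 2 + 1)]) :
    (∀ i, 0 ≤ pvec i) ∧ (∑ i, pvec i = 1) ∧ Matrix.vecMul pvec P = pvec ∧
      ∀ q : Fin 4 → ℝ, (∀ i, 0 ≤ q i) → (∑ i, q i = 1) → Matrix.vecMul q P = q → q = pvec := by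
  have hD : (0:ℝ) < β ^ 3 - β ^ 2 + 1 := by nlinarith
  have hD' : β ^ 3 - β ^ 2 + 1 ≠ 0 := ne_of_gt hD
  have h1β : (1:ℝ) - β ≠ 0 := by linarith
  have hD2 : 1 - β ^ 2 + β ^ 3 ≠ 0 := by nlinarith
  have hD3 : β ^ 2 * (β - 1) + 1 ≠ 0 := by nlinarith
  subst hα hP hpvec
  refine ⟨?_, ?_, ?_, ?_⟩
  · intro i
    fin_cases i <;> simp <;> apply div_nonneg <;> nlinarith
  · simp [Fin.sum_univ_four]
    field_simp
    ring
  · funext j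
    fin_cases j <;>
      simp [Matrix.vecMul, dotProduct, Fin.sum_univ_four,
        Matrix.vecHead, Matrix.vecTail] <;>
      field_simp <;> ring
  · intro q hq0 hqs hqP
    have e0 := congrFun hqP 0
    have e1 := congrFun hqP 1
    have e2 := congrFun hqP 2
    have e3 := congrFun hqP 3
    simp [Matrix.vecMul, dotProduct, Fin.sum_univ_four,
      Matrix.vecHead, Matrix.vecTail] at e0 e1 e2 e3
    simp [Fin.sum_univ_four] at hqs
    have A : q 2 = β * q 1 := by linear_combination -e2
    have B : (1 - β) * q 3 = β ^ 2 * q 1 := by linear_combination -e3 - β * e2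
    have C : β * q 0 = (1 - β ^ 2) * q 1 := by linear_combination e1 - B
    have hq1 : q 1 * (β ^ 3 - β ^ 2 + 1) = β * (1 - β) := by
      linear_combination β * (1 - β) * hqs - (1 - β) * C - β * B - β * (1 - β) * A
    have hq2 : q 2 * (β ^ 3 - β ^ 2 + 1) = β ^ 2 * (1 - β) := by
      linear_combination (β ^ 3 - β ^ 2 + 1) * A + β * hq1
    have hq3 : q 3 * (β ^ 3 - β ^ 2 + 1) = β ^ 3 := by
      apply mul_left_cancel₀ h1β
      linear_combination (β ^ 3 - β ^ 2 + 1) * B + β ^ 2 * hq1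
    have hq0' : q 0 * (β ^ 3 - β ^ 2 + 1) = (1 + β) * (1 - β) ^ 2 := by
      apply mul_left_cancel₀ (ne_of_gt hβ0)
      linear_combination (β ^ 3 - β ^ 2 + 1) * C + (1 - β ^ 2) * hq1
    funext j
    fin_cases j <;> simp <;> field_simp <;> linarith [hq0', hq1, hq2, hq3]
end

section
/- Let 0 < β < 1 and α = 1 − β. The system of linear equations e₀ = α·e₀ + β·e₁ + 1, e₁ = α·e₀ + β·e₂ + 1, e₂ = α·e₀ + β·e₃ + 1, e₃ = α·e₁ + 1 in the real unknowns (e₀, e₁, e₂, e₃) has the unique solution e₀ = (2β³ + β + 1)/β⁴, e₁ = (β³ + β + 1)/β⁴, e₂ = (β³ − β² + β + 1)/β⁴, e₃ = (β³ − β² + 1)/β⁴. -/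
/-- The first-passage linear system for the delay attack on pipelined HotStuff has the unique
solution `e₀ = (2β³+β+1)/β⁴`, `e₁ = (β³+β+1)/β⁴`, `e₂ = (β³−β²+β+1)/β⁴`,
`e₃ = (β³−β²+1)/β⁴`. -/
theorem stmt14 (β α : ℝ) (hβ0 : 0 < β) (hβ1 : β < 1) (hα : α = 1 - β)
    (e0 e1 e2 e3 : ℝ) :
    (e0 = α * e0 + β * e1 + 1 ∧
     e1 = α * e0 + β * e2 + 1 ∧
     e2 = α * e0 + β * e3 + 1 ∧
     e3 = α * e1 + 1) ↔
    (e0 = (2 * β ^ 3 + β + 1) / β ^ 4 ∧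
     e1 = (β ^ 3 + β + 1) / β ^ 4 ∧
     e2 = (β ^ 3 - β ^ 2 + β + 1) / β ^ 4 ∧
     e3 = (β ^ 3 - β ^ 2 + 1) / β ^ 4) := by
  subst hα
  have hb : β ≠ 0 := ne_of_gt hβ0
  constructor
  · rintro ⟨h0, h1, h2, h3⟩
    refine ⟨?_, ?_, ?_, ?_⟩
    · field_simp
      linear_combination (1 - β^2 + β^3) * h0 + β * h1 + β^2 * h2 + β^3 * h3
    · field_simp
      linear_combination (1 - β^2) * h0 + β * h1 + β^2 * h2 + β^3 * h3
    · field_simp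
      linear_combination ((1-β)*(1-β^2+β^3) + β*(1-β)*(1-β^2)) * h0 +
        ((1-β)*β + β^2*(1-β)) * h1 + ((1-β)*β^2 + β^3*(1-β) + β^4) * h2 +
        ((1-β)*β^3 + β^4*(1-β) + β^5) * h3
    · field_simp
      linear_combination (1-β)*(1-β^2) * h0 + (1-β)*β * h1 + (1-β)*β^2 * h2 +
        ((1-β)*β^3 + β^4) * h3
  · rintro ⟨h0, h1, h2, h3⟩
    subst h0 h1 h2 h3
    refine ⟨?_, ?_, ?_, ?_⟩ <;> field_simp <;> ring
end

section
/- Let 0 < β < 1 and α = 1 − β. The system of linear equations e₀ = α·e₀ + β·e₁ + 1, e₁ = α·e₀ + β·e₂ + 1, e₂ = α·e₀ + β·e₃ + 1, e₃ = α·e₀ + 1 in the real unknowns (e₀, e₁, e₂, e₃) has the unique solution e₀ = (β³ + β² + β + 1)/β⁴, e₁ = (β² + β + 1)/β⁴, e₂ = (β + 1)/β⁴, e₃ = 1/β⁴. -/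
/-- The first-passage linear system for the delay attack on LibraBFT has the unique solution
`e₀ = (β³+β²+β+1)/β⁴`, `e₁ = (β²+β+1)/β⁴`, `e₂ = (β+1)/β⁴`, `e₃ = 1/β⁴`. -/
theorem stmt15 (β α : ℝ) (hβ0 : 0 < β) (hβ1 : β < 1) (hα : α = 1 - β)
    (e0 e1 e2 e3 : ℝ) :
    (e0 = α * e0 + β * e1 + 1 ∧
     e1 = α * e0 + β * e2 + 1 ∧
     e2 = α * e0 + β * e3 + 1 ∧
     e3 = α * e0 + 1) ↔
    (e0 = (β ^ 3 + β ^ 2 + β + 1) / β ^ 4 ∧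
     e1 = (β ^ 2 + β + 1) / β ^ 4 ∧
     e2 = (β + 1) / β ^ 4 ∧
     e3 = 1 / β ^ 4) := by
  have hb : β ≠ 0 := ne_of_gt hβ0
  subst hα
  constructor
  · rintro ⟨h1, h2, h3, h4⟩
    have he0 : e0 = (β ^ 3 + β ^ 2 + β + 1) / β ^ 4 := by
      field_simp
      linear_combination h1 + β * h2 + β^2 * h3 + β^3 * h4
    refine ⟨he0, ?_, ?_, ?_⟩
    · rw [h2, h3, h4, he0]; field_simp; ring
    · rw [h3, h4, he0]; field_simp; ring
    · rw [h4, he0]; field_simp; ring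
  · rintro ⟨h1, h2, h3, h4⟩
    subst h1 h2 h3 h4
    refine ⟨?_, ?_, ?_, ?_⟩ <;> field_simp <;> ring
end

section
/- Let 0 < β < 1 and α = 1 − β. The system of linear equations e₀ = α·e₀ + β·e₁ + 1, e₁ = α·e₀ + β·e₂ + 1, e₂ = α·e₀ + 1 in the real unknowns (e₀, e₁, e₂) has the unique solution e₀ = (β² + β + 1)/β³, e₁ = (β + 1)/β³, e₂ = 1/β³. In particular e₁ = (β+1)/β³, which is the latency of pipelined HotStuff with broadcasting QCs under the delay attack. -/
/-- The first-passage linear system for the delay attack on pipelined HotStuff with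
broadcasting QCs has the unique solution `e₀ = (β²+β+1)/β³`, `e₁ = (β+1)/β³`, `e₂ = 1/β³`.
In particular `e₁ = (β+1)/β³` is the latency under the delay attack. -/
theorem stmt16 (β α : ℝ) (hβ0 : 0 < β) (hβ1 : β < 1) (hα : α = 1 - β)
    (e0 e1 e2 : ℝ) :
    (e0 = α * e0 + β * e1 + 1 ∧
     e1 = α * e0 + β * e2 + 1 ∧
     e2 = α * e0 + 1) ↔
    (e0 = (β ^ 2 + β + 1) / β ^ 3 ∧
     e1 = (β + 1) / β ^ 3 ∧
     e2 = 1 / β ^ 3) := by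
  have hβ : β ≠ 0 := ne_of_gt hβ0
  subst hα
  constructor
  · rintro ⟨h0, h1, h2⟩
    have he0 : e0 = (β ^ 2 + β + 1) / β ^ 3 := by
      field_simp
      nlinarith [h0, h1, h2, sq_nonneg β]
    refine ⟨he0, ?_, ?_⟩
    · field_simp
      nlinarith [h0, h1, h2]
    · field_simp
      nlinarith [h0, h1, h2]
  · rintro ⟨h0, h1, h2⟩
    subst h0 h1 h2
    refine ⟨?_, ?_, ?_⟩ <;> field_simp <;> ring
end
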